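/- Let s be a positive integer, let r_1, …, r_s be positive integers, and let n_1 < n_2 < ⋯ < n_s be real numbers with n_1 ≥ 0 and, in case s ≥ 2, n_{s-1} ≤ n_s − 1. Set f(x) = (x − n_1)^{r_1} (x − n_2)^{r_2} ⋯ (x − n_s)^{r_s}. Then there exists exactly one real number x_0 in the half-open interval (n_s, n_s + 1] with f(x_0) = 1; that is, the polynomial f(x) − 1 has a unique real root in (n_s, n_s + 1]. -/
import Mathlib


/-- Let `s ≥ 1`, `r₁, …, r_s` positive integers, and
`n₁ < n₂ < ⋯ < n_s` real numbers with `n₁ ≥ 0` and `n_{s-1} ≤ n_s - 1` when `s ≥ 2`.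
Set `f(x) = (x - n₁)^{r₁} ⋯ (x - n_s)^{r_s}`.  Then `f(x) - 1` has a unique real
root in the half-open interval `(n_s, n_s + 1]`. -/
theorem statement0 (s : ℕ) (hs : 0 < s) (r : Fin s → ℕ) (hr : ∀ i, 0 < r i)
    (n : Fin s → ℝ) (hmono : StrictMono n) (hn0 : 0 ≤ n ⟨0, hs⟩)
    (hgap : ∀ _ : 2 ≤ s, n ⟨s - 2, by omega⟩ ≤ n ⟨s - 1, by omega⟩ - 1) :
    ∃! x₀ : ℝ, x₀ ∈ Set.Ioc (n ⟨s - 1, by omega⟩) (n ⟨s - 1, by omega⟩ + 1) ∧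
      ∏ i : Fin s, (x₀ - n i) ^ r i = 1 := by
  set N : ℝ := n ⟨s - 1, by omega⟩ with hN
  set f : ℝ → ℝ := fun x => ∏ i : Fin s, (x - n i) ^ r i with hf
  have hle : ∀ i : Fin s, n i ≤ N := by
    intro i
    exact hmono.monotone (by rw [Fin.le_def]; have := i.isLt; simp; omega)
  have hcont : Continuous f := by
    apply continuous_finset_prod
    intro i _
    exact (continuous_id.sub continuous_const).pow _
  have hfN : f N = 0 := by
    apply Finset.prod_eq_zero (Finset.mem_univ ⟨s - 1, by omega⟩)
    rw [← hN]
    simp [zero_pow (hr _).ne']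
  have hne : Nonempty (Fin s) := ⟨⟨0, hs⟩⟩
  have hfN1 : 1 ≤ f (N + 1) := by
    simp only [hf]
    calc (1:ℝ) = ∏ _i : Fin s, 1 := by simp
    _ ≤ ∏ i : Fin s, (N + 1 - n i) ^ r i := by
        apply Finset.prod_le_prod (fun i _ => zero_le_one)
        intro i _
        apply one_le_pow₀
        have : n i ≤ N := hle i
        linarith
  have hsm : StrictMonoOn f (Set.Ioi N) := by
    intro x hx y hy hxy
    apply Finset.prod_lt_prod_of_nonempty
    · intro i _
      have := hle i
      have : 0 < x - n i := by simp at hx; linarith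
      positivity
    · intro i _
      apply pow_lt_pow_left₀ (by linarith)
      · have := hle i; simp at hx; linarith
      · exact (hr i).ne'
    · exact Finset.univ_nonempty
  have hmem : (1 : ℝ) ∈ Set.Ioc (f N) (f (N + 1)) := ⟨by rw [hfN]; norm_num, hfN1⟩
  obtain ⟨x₀, hx₀, hfx₀⟩ := intermediate_value_Ioc (by linarith : N ≤ N + 1)
    hcont.continuousOn hmem
  refine ⟨x₀, ⟨hx₀, hfx₀⟩, ?_⟩
  rintro y ⟨hy, hfy⟩
  exact hsm.injOn (Set.mem_of_mem_of_subset hy Set.Ioc_subset_Ioi_self)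
    (Set.mem_of_mem_of_subset hx₀ Set.Ioc_subset_Ioi_self) (hfy.trans hfx₀.symm)
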